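/- Let Λ₂(a,b₁,b₂,r) = [₂F₁(a,b₁;c₁+1;r)·₂F₁(a,b₂;c₂;r)] / [₂F₁(a,b₁;c₁;r)·₂F₁(a,b₂;c₂+1;r)] with c₁ = a+b₁, c₂ = a+b₂, b₁ < b₂, all parameters positive. Then lim_{r→0} (Λ₂(a,b₁,b₂,r) − 1)/r = a(b₂−b₁)[a(a+1) − b₁b₂] / [c₁c₂(c₁+1)(c₂+1)]. In particular, if b₁b₂ > a(a+1) there exists r₀ ∈ (0,1) such that Λ₂(a,b₁,b₂,r) < 1 for all r ∈ (0,r₀). -/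

import Mathlib

open Real Filter Set

noncomputable def poch (x : ℝ) (n : ℕ) : ℝ := (ascPochhammer ℝ n).eval x

noncomputable def hyp (a b c x : ℝ) : ℝ :=
  ∑' n : ℕ, poch a n * poch b n / (poch c n * n.factorial) * x ^ n

noncomputable def digamma (x : ℝ) : ℝ := deriv Real.Gamma x / Real.Gamma x

noncomputable def Lam2 (a b₁ b₂ r : ℝ) : ℝ :=
  hyp a b₁ (a + b₁ + 1) r * hyp a b₂ (a + b₂) r /
    (hyp a b₁ (a + b₁) r * hyp a b₂ (a + b₂ + 1) r)

lemma poch_zero (x : ℝ) : poch x 0 = 1 := by simp [poch]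

lemma poch_one (x : ℝ) : poch x 1 = x := by simp [poch, ascPochhammer_one]

lemma poch_succ (x : ℝ) (n : ℕ) : poch x (n + 1) = poch x n * (x + n) := by
  simp [poch, ascPochhammer_succ_eval]

lemma poch_pos {x : ℝ} (hx : 0 < x) (n : ℕ) : 0 < poch x n := by
  induction n with
  | zero => simp [poch_zero]
  | succ n ih => rw [poch_succ]; positivity

noncomputable def hcoef (a b c : ℝ) (n : ℕ) : ℝ :=
  poch a n * poch b n / (poch c n * n.factorial)

lemma hcoef_zero (a b c : ℝ) : hcoef a b c 0 = 1 := by simp [hcoef, poch_zero]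

lemma hcoef_one (a b c : ℝ) : hcoef a b c 1 = a * b / c := by
  simp [hcoef, poch_one]

lemma hcoef_nonneg {a b c : ℝ} (ha : 0 < a) (hb : 0 < b) (hc : 0 < c) (n : ℕ) :
    0 ≤ hcoef a b c n := by
  have h1 := poch_pos ha n
  have h2 := poch_pos hb n
  have h3 := poch_pos hc n
  have h4 : (0:ℝ) < (n.factorial : ℝ) := by positivity
  unfold hcoef; positivity

lemma hcoef_succ (a b c : ℝ) (hc : 0 < c) (n : ℕ) :
    hcoef a b c (n + 1) = hcoef a b c n * ((a + n) * (b + n) / ((c + n) * (n + 1))) := by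
  have h3 : poch c n ≠ 0 := (poch_pos hc n).ne'
  have h4 : ((n.factorial : ℝ)) ≠ 0 := by positivity
  have h5 : c + (n:ℝ) ≠ 0 := by positivity
  have h6 : (n:ℝ) + 1 ≠ 0 := by positivity
  rw [hcoef, hcoef, poch_succ, poch_succ, poch_succ, Nat.factorial_succ]
  push_cast
  field_simp

lemma hcoef_le {a b c : ℝ} (ha : 0 < a) (hb : 0 < b) (hc : 0 < c) (n : ℕ) :
    hcoef a b c n ≤ ((a+1)*(b+1)/min c 1) ^ n := by
  induction n with
  | zero => simp [hcoef_zero]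
  | succ n ih =>
    have hm : 0 < min c 1 := lt_min hc one_pos
    have hmc : min c 1 ≤ c := min_le_left _ _
    have hm1 : min c 1 ≤ 1 := min_le_right _ _
    have hn : (0:ℝ) ≤ (n:ℝ) := Nat.cast_nonneg n
    have hratio : (a + n) * (b + n) / ((c + n) * (n + 1)) ≤ (a+1)*(b+1)/min c 1 := by
      rw [div_le_div_iff₀ (by positivity) hm]
      have h1 : (a:ℝ) + n ≤ (a+1)*((n:ℝ)+1) := by nlinarith
      have h2 : (b:ℝ) + n ≤ (b+1)*((n:ℝ)+1) := by nlinarith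
      have h3 : min c 1 * ((n:ℝ)+1) ≤ c + n := by nlinarith
      calc (a + (n:ℝ)) * (b + n) * (min c 1) ≤ ((a+1)*((n:ℝ)+1)) * ((b+1)*((n:ℝ)+1)) * (min c 1) := by
            apply mul_le_mul_of_nonneg_right _ hm.le
            exact mul_le_mul h1 h2 (by linarith) (by positivity)
        _ = (a+1)*(b+1)*(((n:ℝ)+1)*(min c 1 * ((n:ℝ)+1))) := by ring
        _ ≤ (a+1)*(b+1)*(((n:ℝ)+1)*(c+n)) := by
            apply mul_le_mul_of_nonneg_left _ (by positivity)
            exact mul_le_mul_of_nonneg_left h3 (by linarith)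
        _ = (a + 1) * (b + 1) * ((c + (n:ℝ)) * ((n:ℝ) + 1)) := by ring
    rw [hcoef_succ a b c hc, pow_succ]
    have hnn := hcoef_nonneg ha hb hc n
    have hrnn : 0 ≤ (a + (n:ℝ)) * (b + (n:ℝ)) / ((c + (n:ℝ)) * ((n:ℝ) + 1)) := by positivity
    exact mul_le_mul ih hratio hrnn (by positivity)

lemma hyp_est {a b c : ℝ} (ha : 0 < a) (hb : 0 < b) (hc : 0 < c) {x : ℝ} (hx : 0 < x) (hx2 : ((a+1)*(b+1)/min c 1) * x < 1/2) :
    |hyp a b c x - 1 - a * b / c * x| ≤ 2 * ((a+1)*(b+1)/min c 1)^2 * x^2 := by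
  set K := (a+1)*(b+1)/min c 1 with hKdef
  have hK : 0 < K := by
    have : 0 < min c 1 := lt_min hc one_pos
    positivity
  have hKx : 0 ≤ K * x := by positivity
  have hKx1 : K * x < 1 := by linarith
  set f : ℕ → ℝ := fun n => hcoef a b c n * x ^ n with hf
  have hfle : ∀ n, f n ≤ (K * x) ^ n := fun n => by
    rw [mul_pow]
    exact mul_le_mul_of_nonneg_right (hcoef_le ha hb hc n) (by positivity)
  have hfnn : ∀ n, 0 ≤ f n := fun n => by
    have := hcoef_nonneg ha hb hc n; positivity
  have hgeo : Summable fun n : ℕ => (K * x) ^ n := summable_geometric_of_lt_one hKx hKx1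
  have hsum : Summable f := hgeo.of_nonneg_of_le hfnn hfle
  have hsum1 : Summable fun n => f (n + 1) := (summable_nat_add_iff 1).mpr hsum
  have hsum2 : Summable fun n => f (n + 2) := (summable_nat_add_iff 2).mpr hsum
  have hhyp : hyp a b c x = ∑' n, f n := rfl
  have hsplit : hyp a b c x = 1 + a * b / c * x + ∑' n, f (n + 2) := by
    rw [hhyp, Summable.tsum_eq_zero_add hsum, Summable.tsum_eq_zero_add hsum1]
    simp only [hf, hcoef_zero, hcoef_one, pow_zero, pow_one, one_mul, mul_one]
    simp only [show ∀ n:ℕ, n+1+1 = n+2 from fun _ => rfl]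
    rw [hcoef_one]
    ring
  have htail_nn : 0 ≤ ∑' n, f (n + 2) := tsum_nonneg fun n => hfnn _
  have hgeo2 : Summable fun n : ℕ => (K * x) ^ (n + 2) := (summable_nat_add_iff 2).mpr hgeo
  have htail_le : ∑' n, f (n + 2) ≤ (K * x)^2 * (1 - K * x)⁻¹ := by
    calc ∑' n, f (n + 2) ≤ ∑' n : ℕ, (K * x) ^ (n + 2) :=
          Summable.tsum_le_tsum (fun n => hfle _) hsum2 hgeo2
      _ = (K * x)^2 * ∑' n : ℕ, (K * x) ^ n := by
          rw [← tsum_mul_left]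
          exact tsum_congr fun n => by ring
      _ = (K * x)^2 * (1 - K * x)⁻¹ := by rw [tsum_geometric_of_lt_one hKx hKx1]
  have hfinal : (K * x)^2 * (1 - K * x)⁻¹ ≤ 2 * K^2 * x^2 := by
    have h1 : (1 - K * x)⁻¹ ≤ 2 := by
      rw [inv_le_iff_one_le_mul₀ (by linarith)]
      linarith
    calc (K * x)^2 * (1 - K * x)⁻¹ ≤ (K * x)^2 * 2 :=
          mul_le_mul_of_nonneg_left h1 (by positivity)
      _ = 2 * K^2 * x^2 := by ring
  rw [hsplit, show 1 + a * b / c * x + (∑' n, f (n + 2)) - 1 - a * b / c * x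
      = ∑' n, f (n + 2) from by ring, abs_of_nonneg htail_nn]
  linarith


lemma hyp_slope {a b c : ℝ} (ha : 0 < a) (hb : 0 < b) (hc : 0 < c) :
    Tendsto (fun x => (hyp a b c x - 1) / x) (nhdsWithin 0 (Ioi 0)) (nhds (a * b / c)) := by
  have hm : 0 < min c 1 := lt_min hc one_pos
  set K := (a+1)*(b+1)/min c 1 with hKdef
  have hK : 0 < K := by positivity
  rw [tendsto_iff_norm_sub_tendsto_zero]
  simp only [Real.norm_eq_abs]
  apply squeeze_zero' (Eventually.of_forall fun x => abs_nonneg _)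
    (g := fun x => 2 * K^2 * x)
  · filter_upwards [Ioo_mem_nhdsGT_of_mem (show (0:ℝ) ∈ Ico 0 (1/(2*K)) from
      ⟨le_refl _, by positivity⟩)] with x hx
    obtain ⟨hx0, hx1⟩ := hx
    have hKx : K * x < 1/2 := by
      calc K * x < K * (1/(2*K)) := by exact mul_lt_mul_of_pos_left hx1 hK
        _ = 1/2 := by field_simp
    have hest := hyp_est ha hb hc hx0 hKx
    have heq : (hyp a b c x - 1) / x - a * b / c = (hyp a b c x - 1 - a * b / c * x) / x := by
      field_simp
    rw [heq, abs_div, abs_of_pos hx0, div_le_iff₀ hx0]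
    calc |hyp a b c x - 1 - a * b / c * x| ≤ 2 * K^2 * x^2 := hest
      _ = 2 * K^2 * x * x := by ring
  · have : Tendsto (fun x : ℝ => 2 * K^2 * x) (nhds 0) (nhds 0) := by
      have h3 : Continuous fun x : ℝ => 2 * K^2 * x := continuous_const.mul continuous_id
      simpa using h3.tendsto 0
    exact this.mono_left nhdsWithin_le_nhds

lemma hyp_one {a b c : ℝ} (ha : 0 < a) (hb : 0 < b) (hc : 0 < c) :
    Tendsto (fun x => hyp a b c x) (nhdsWithin 0 (Ioi 0)) (nhds 1) := by
  have h := hyp_slope ha hb hc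
  have hid : Tendsto (fun x : ℝ => x) (nhdsWithin 0 (Ioi 0)) (nhds 0) :=
    tendsto_id.mono_right nhdsWithin_le_nhds
  have h2 := (h.mul hid).add tendsto_const_nhds (b := 1)
  rw [mul_zero, zero_add] at h2
  apply h2.congr'
  filter_upwards [self_mem_nhdsWithin] with x hx
  have hx0 : x ≠ 0 := ne_of_gt hx
  field_simp
  ring

lemma prod_slope {a b c a' b' c' : ℝ} (ha : 0 < a) (hb : 0 < b) (hc : 0 < c)
    (ha' : 0 < a') (hb' : 0 < b') (hc' : 0 < c') :
    Tendsto (fun x => (hyp a b c x * hyp a' b' c' x - 1) / x) (nhdsWithin 0 (Ioi 0))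
      (nhds (a * b / c + a' * b' / c')) := by
  have h := ((hyp_slope ha hb hc).mul (hyp_one ha' hb' hc')).add (hyp_slope ha' hb' hc')
  rw [mul_one] at h
  apply h.congr'
  filter_upwards [self_mem_nhdsWithin] with x hx
  have hx0 : (x:ℝ) ≠ 0 := ne_of_gt hx
  field_simp
  ring

theorem stmt19 (a b₁ b₂ : ℝ) (ha : 0 < a) (hb₁ : 0 < b₁) (hb₂ : b₁ < b₂) :
    Filter.Tendsto (fun r : ℝ => (Lam2 a b₁ b₂ r - 1) / r)
      (nhdsWithin 0 (Set.Ioi 0))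
      (nhds (a * (b₂ - b₁) * (a * (a + 1) - b₁ * b₂) /
        ((a + b₁) * (a + b₂) * (a + b₁ + 1) * (a + b₂ + 1)))) ∧
    (b₁ * b₂ > a * (a + 1) →
      ∃ r₀ ∈ Set.Ioo (0 : ℝ) 1, ∀ r ∈ Set.Ioo 0 r₀, Lam2 a b₁ b₂ r < 1) := by
  have hb₂' : 0 < b₂ := hb₁.trans hb₂
  have hc₁ : 0 < a + b₁ := by linarith
  have hc₂ : 0 < a + b₂ := by linarith
  have hc₁' : 0 < a + b₁ + 1 := by linarith
  have hc₂' : 0 < a + b₂ + 1 := by linarith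
  set L : ℝ := a * (b₂ - b₁) * (a * (a + 1) - b₁ * b₂) /
        ((a + b₁) * (a + b₂) * (a + b₁ + 1) * (a + b₂ + 1)) with hLdef
  have hTN := prod_slope ha hb₁ hc₁' ha hb₂' hc₂
  have hTD := prod_slope ha hb₁ hc₁ ha hb₂' hc₂'
  have hO3 := hyp_one ha hb₁ hc₁
  have hO4 := hyp_one ha hb₂' hc₂'
  have hmain : Tendsto (fun r : ℝ => (Lam2 a b₁ b₂ r - 1) / r) (nhdsWithin 0 (Ioi 0)) (nhds L) := by
    have h := (hTN.sub hTD).div (hO3.mul hO4) (by norm_num)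
    have hval : (a * b₁ / (a + b₁ + 1) + a * b₂ / (a + b₂) -
        (a * b₁ / (a + b₁) + a * b₂ / (a + b₂ + 1))) / (1 * 1) = L := by
      rw [hLdef]
      field_simp
      ring
    rw [hval] at h
    apply h.congr'
    filter_upwards [self_mem_nhdsWithin,
      hO3.eventually_ne one_ne_zero, hO4.eventually_ne one_ne_zero] with r hr h3 h4
    have hr0 : (r:ℝ) ≠ 0 := ne_of_gt hr
    rw [Lam2]
    field_simp
    ring_nf
    simp only [Pi.div_apply]
    have h4' : hyp a b₂ (1 + a + b₂) r ≠ 0 := by rw [show 1 + a + b₂ = a + b₂ + 1 by ring]; exact h4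
    field_simp
    ring
  refine ⟨hmain, fun hgt => ?_⟩
  have hLneg : L < 0 := by
    rw [hLdef]
    apply div_neg_of_neg_of_pos
    · apply mul_neg_of_pos_of_neg
      · have : 0 < b₂ - b₁ := by linarith
        positivity
      · linarith
    · positivity
  have hev : ∀ᶠ r in nhdsWithin (0:ℝ) (Ioi 0), Lam2 a b₁ b₂ r < 1 := by
    filter_upwards [self_mem_nhdsWithin, hmain.eventually (eventually_lt_nhds hLneg)]
      with r hr hlt
    have h2 : (Lam2 a b₁ b₂ r - 1) / r * r < 0 := mul_neg_of_neg_of_pos hlt hr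
    rw [div_mul_cancel₀ _ (ne_of_gt hr)] at h2
    linarith
  rw [eventually_iff, mem_nhdsGT_iff_exists_Ioo_subset] at hev
  obtain ⟨u, hu, hsub⟩ := hev
  refine ⟨min u (1/2), ⟨lt_min hu (by norm_num), lt_of_le_of_lt (min_le_right _ _) (by norm_num)⟩,
    fun r hr => ?_⟩
  exact hsub ⟨hr.1, lt_of_lt_of_le hr.2 (min_le_left _ _)⟩
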